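/- Suppose f ∈ C²(ℝ^d) with ‖∇²f(x)‖ ≤ M for all x, and 0 < α < 1/M. Let x* = 0 be a strict saddle point of f with f(0) = 0 and all eigenvalues of ∇²f(0) nonzero. Let U₁ be a neighborhood of 0 and σ > 0 be such that ‖∇f(x)‖ ≥ σ‖x‖ for all x ∈ U₁, let ρ ∈ (0,1) satisfy ρM + Mρ²/2 < (ασ²/(2d))(1−ρ)², set U₂ := ⋃_{x : f(x)=0} B(x, ρ‖x‖) and S := U₁ ∩ U₂ ∩ f⁻¹([0,∞)). Then there exist a constant p > 0 and a neighborhood U of 0 such that f(x) ≥ p‖x‖² for every x ∈ (U ∩ f⁻¹([0,∞))) \ S. -/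

import Mathlib

/-!
Take `x ∈ U₁ \ S` with `f x ≥ 0`, so that `x ∉ U₂`. Then every zero `y` of `f` satisfies
`ρ‖y‖ ≤ ‖x - y‖`, hence `‖x - y‖ ≥ ρ‖x‖ / (1 + ρ)`: the ball of radius `ρ‖x‖ / (1 + ρ)` around
`x` is free of zeros, so `f ≥ 0` on it by the intermediate value theorem. A gradient step of length
`t = s‖x‖` with `s` small stays in that ball, and by the quadratic upper bound coming from
`‖∇²f‖ ≤ M` it lowers `f` by at least `t‖∇f x‖ - M t² ≥ s(σ - M s)‖x‖²`. As the value after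
the step is still nonnegative, `f x ≥ s(σ - M s)‖x‖²`, and `s(σ - M s) > 0` once `s < σ / M`.
-/

open MeasureTheory Filter Topology

noncomputable section

/-- The Hessian `∇²f(x)` of `f` at `x`, as a continuous linear map. -/
def hess (d : ℕ) (f : EuclideanSpace ℝ (Fin d) → ℝ) (x : EuclideanSpace ℝ (Fin d)) :
    EuclideanSpace ℝ (Fin d) →L[ℝ] EuclideanSpace ℝ (Fin d) :=
  fderiv ℝ (gradient f) x

open Metric Set RealInnerProductSpace

theorem IsPreconnected.forall_pos_of_forall_ne_zero {X : Type*} [TopologicalSpace X] {s : Set X}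
    (hs : IsPreconnected s) {f : X → ℝ} (hf : ContinuousOn f s) (hne : ∀ y ∈ s, f y ≠ 0)
    {x : X} (hx : x ∈ s) (hfx : 0 ≤ f x) : ∀ y ∈ s, 0 < f y := by
  intro y hy
  by_contra! hfy
  obtain ⟨z, hz, hfz⟩ := hs.intermediate_value hy hx hf ⟨hfy, hfx⟩
  exact hne z hz hfz

theorem div_one_add_mul_norm_le_dist {E : Type*} [SeminormedAddCommGroup E] {x y : E} {ρ : ℝ}
    (hρ : 0 ≤ ρ) (h : ρ * ‖y‖ ≤ dist x y) : ρ / (1 + ρ) * ‖x‖ ≤ dist x y := by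
  have hx : ‖x‖ ≤ ‖y‖ + dist x y := dist_eq_norm x y ▸ norm_le_norm_add_norm_sub' x y
  rw [div_mul_eq_mul_div, div_le_iff₀ (by positivity)]
  nlinarith

section Gradient

variable {E : Type*} [NormedAddCommGroup E] [InnerProductSpace ℝ E] [CompleteSpace E]
  {f : E → ℝ}

theorem ContDiff.differentiable_gradient (hf : ContDiff ℝ 2 f) : Differentiable ℝ (gradient f) :=
  (InnerProductSpace.toDual ℝ E).symm.differentiable.comp
    ((hf.fderiv_right (m := 1) (by norm_num)).differentiable (by norm_num))

theorem ContDiff.lipschitzWith_gradient {M : ℝ} (hf : ContDiff ℝ 2 f)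
    (hM : ∀ x, ‖fderiv ℝ (gradient f) x‖ ≤ M) : LipschitzWith M.toNNReal (gradient f) :=
  lipschitzWith_of_nnnorm_fderiv_le hf.differentiable_gradient fun x => by
    rw [← norm_toNNReal]
    exact Real.toNNReal_le_toNNReal (hM x)

theorem abs_sub_sub_inner_gradient_le {K : NNReal} (hf : Differentiable ℝ f)
    (hK : LipschitzWith K (gradient f)) (x v : E) :
    |f (x + v) - f x - ⟪gradient f x, v⟫| ≤ K * ‖v‖ ^ 2 := by
  set g := InnerProductSpace.toDual ℝ E (gradient f x)
  have hderiv : ∀ y, HasFDerivAt (fun y => f y - g y)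
      (InnerProductSpace.toDual ℝ E (gradient f y - gradient f x)) y := fun y => by
    rw [map_sub]
    exact (hf y).hasGradientAt.hasFDerivAt.sub g.hasFDerivAt
  have hbound : ∀ y ∈ closedBall x ‖v‖,
      ‖InnerProductSpace.toDual ℝ E (gradient f y - gradient f x)‖ ≤ K * ‖v‖ := fun y hy => by
    rw [LinearIsometryEquiv.norm_map, ← dist_eq_norm]
    exact (hK.dist_le_mul y x).trans (by gcongr; exact hy)
  have := (convex_closedBall x ‖v‖).norm_image_sub_le_of_norm_hasFDerivWithin_le
    (fun y _ => (hderiv y).hasFDerivWithinAt) hbound (mem_closedBall_self (norm_nonneg v))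
    (by simp : x + v ∈ closedBall x ‖v‖)
  have hg : g (x + v) = g x + ⟪gradient f x, v⟫ := map_add g x v
  rw [Real.norm_eq_abs, hg, add_sub_cancel_left] at this
  rw [sq, ← mul_assoc]
  convert this using 2
  ring

theorem mul_norm_gradient_sub_le_of_nonneg_on_closedBall {K : NNReal} {t : ℝ} {x : E}
    (hf : Differentiable ℝ f) (hK : LipschitzWith K (gradient f)) (ht : 0 ≤ t)
    (hnn : ∀ y ∈ closedBall x t, 0 ≤ f y) : t * ‖gradient f x‖ - K * t ^ 2 ≤ f x := by
  by_cases hg : gradient f x = 0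
  · have := hnn x (mem_closedBall_self ht)
    rw [hg, norm_zero, mul_zero, zero_sub, neg_le]
    exact (neg_nonpos.2 this).trans (by positivity)
  have hgpos : 0 < ‖gradient f x‖ := norm_pos_iff.2 hg
  set w := -(t / ‖gradient f x‖) • gradient f x
  have hw : ‖w‖ = t := by
    rw [norm_smul, norm_neg, Real.norm_of_nonneg (by positivity), div_mul_cancel₀ _ hgpos.ne']
  have hinner : ⟪gradient f x, w⟫ = -(t * ‖gradient f x‖) := by
    rw [real_inner_smul_right, real_inner_self_eq_norm_sq]
    field_simp
  have hstep := (le_abs_self _).trans (abs_sub_sub_inner_gradient_le hf hK x w)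
  have hfw := hnn (x + w) (by rw [mem_closedBall, dist_self_add_left, hw])
  rw [hinner, hw] at hstep
  linarith

theorem mul_sub_mul_mul_sq_norm_le_of_forall_ne_zero_ball {K : NNReal} {σ c s : ℝ} {x : E}
    (hf : Differentiable ℝ f) (hK : LipschitzWith K (gradient f)) (hs0 : 0 ≤ s) (hsc : s < c)
    (hfx : 0 ≤ f x) (hgrad : σ * ‖x‖ ≤ ‖gradient f x‖)
    (hfree : ∀ y ∈ ball x (c * ‖x‖), f y ≠ 0) : s * (σ - K * s) * ‖x‖ ^ 2 ≤ f x := by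
  rcases eq_or_ne x 0 with rfl | hx0
  · simpa using hfx
  have hx : 0 < ‖x‖ := norm_pos_iff.2 hx0
  have hpos := (convex_ball x (c * ‖x‖)).isPreconnected.forall_pos_of_forall_ne_zero
    hf.continuous.continuousOn hfree (mem_ball_self (by nlinarith)) hfx
  have hstep := mul_norm_gradient_sub_le_of_nonneg_on_closedBall (t := s * ‖x‖) hf hK
    (by positivity) fun y hy => (hpos y (closedBall_subset_ball (by gcongr) hy)).le
  calc s * (σ - K * s) * ‖x‖ ^ 2 = s * ‖x‖ * (σ * ‖x‖) - K * (s * ‖x‖) ^ 2 := by ring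
    _ ≤ s * ‖x‖ * ‖gradient f x‖ - K * (s * ‖x‖) ^ 2 := by gcongr
    _ ≤ f x := hstep

end Gradient

theorem rcgd_local_quadratic_growth_general
    {d : ℕ} (f : EuclideanSpace ℝ (Fin d) → ℝ) (M : ℝ)
    (hf : ContDiff ℝ 2 f)
    (hM : ∀ x, ‖hess d f x‖ ≤ M)
    (U₁ : Set (EuclideanSpace ℝ (Fin d))) (hU₁ : U₁ ∈ 𝓝 (0 : EuclideanSpace ℝ (Fin d)))
    (σ : ℝ) (hσ : 0 < σ)
    (hgrad : ∀ x ∈ U₁, σ * ‖x‖ ≤ ‖gradient f x‖)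
    (ρ : ℝ) (hρ0 : 0 < ρ)
    (S : Set (EuclideanSpace ℝ (Fin d)))
    (hS : S = U₁ ∩ (⋃ x ∈ {x : EuclideanSpace ℝ (Fin d) | f x = 0}, Metric.ball x (ρ * ‖x‖)) ∩
      f ⁻¹' Set.Ici (0 : ℝ)) :
    ∃ p > (0 : ℝ), ∃ U ∈ 𝓝 (0 : EuclideanSpace ℝ (Fin d)),
      ∀ x ∈ (U ∩ f ⁻¹' Set.Ici (0 : ℝ)) \ S, p * ‖x‖ ^ 2 ≤ f x := by
  have hM0 : 0 ≤ M := (norm_nonneg _).trans (hM 0)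
  set c := ρ / (1 + ρ)
  set s := min (c / 2) (σ / (M + 1))
  have hs0 : 0 < s := lt_min (by positivity) (by positivity)
  have hsc : s < c := (min_le_left _ _).trans_lt (half_lt_self (by positivity))
  have hsM : s * (M + 1) ≤ σ := (le_div_iff₀ (by positivity)).1 (min_le_right _ _)
  refine ⟨s * (σ - M * s), mul_pos hs0 (by linarith), U₁, hU₁, ?_⟩
  rintro x ⟨⟨hxU, hxf : 0 ≤ f x⟩, hxS⟩
  have hfree : ∀ y ∈ ball x (c * ‖x‖), f y ≠ 0 := fun y hy hfy => by
    have hxy : ρ * ‖y‖ ≤ dist x y :=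
      not_lt.1 fun h => hxS (hS ▸ ⟨⟨hxU, mem_biUnion hfy h⟩, hxf⟩)
    exact (div_one_add_mul_norm_le_dist hρ0.le hxy).not_gt (mem_ball'.1 hy)
  have hbound := mul_sub_mul_mul_sq_norm_le_of_forall_ne_zero_ball
    (hf.differentiable (by norm_num)) (hf.lipschitzWith_gradient hM) hs0.le hsc hxf
    (hgrad x hxU) hfree
  rwa [Real.coe_toNNReal _ hM0] at hbound

/-- Local quadratic lower bound: near the non-degenerate strict saddle point `0`, the function
`f` satisfies `f(x) ≥ p‖x‖²` on `(U ∩ f⁻¹([0,∞))) \ S`, where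
`S = U₁ ∩ U₂ ∩ f⁻¹([0,∞))` and `U₂ = ⋃_{f(x) = 0} B(x, ρ‖x‖)`. -/
theorem rcgd_local_quadratic_growth
    {d : ℕ} (hd : 1 ≤ d) (f : EuclideanSpace ℝ (Fin d) → ℝ) (M α : ℝ)
    (hf : ContDiff ℝ 2 f)
    (hM : ∀ x, ‖hess d f x‖ ≤ M)
    (hα : 0 < α) (hα' : α < 1 / M)
    (hcrit : gradient f 0 = 0) (hf0 : f 0 = 0)
    (hneg : ∃ μ < (0 : ℝ), Module.End.HasEigenvalue (hess d f 0).toLinearMap μ)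
    (hnd : ∀ μ : ℝ, Module.End.HasEigenvalue (hess d f 0).toLinearMap μ → μ ≠ 0)
    (U₁ : Set (EuclideanSpace ℝ (Fin d))) (hU₁ : U₁ ∈ 𝓝 (0 : EuclideanSpace ℝ (Fin d)))
    (σ : ℝ) (hσ : 0 < σ)
    (hgrad : ∀ x ∈ U₁, σ * ‖x‖ ≤ ‖gradient f x‖)
    (ρ : ℝ) (hρ0 : 0 < ρ) (hρ1 : ρ < 1)
    (hρ : ρ * M + M * ρ ^ 2 / 2 < (α * σ ^ 2 / (2 * d)) * (1 - ρ) ^ 2)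
    (S : Set (EuclideanSpace ℝ (Fin d)))
    (hS : S = U₁ ∩ (⋃ x ∈ {x : EuclideanSpace ℝ (Fin d) | f x = 0}, Metric.ball x (ρ * ‖x‖)) ∩
      f ⁻¹' Set.Ici (0 : ℝ)) :
    ∃ p > (0 : ℝ), ∃ U ∈ 𝓝 (0 : EuclideanSpace ℝ (Fin d)),
      ∀ x ∈ (U ∩ f ⁻¹' Set.Ici (0 : ℝ)) \ S, p * ‖x‖ ^ 2 ≤ f x :=
  rcgd_local_quadratic_growth_general f M hf hM U₁ hU₁ σ hσ hgrad ρ hρ0 S hS
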